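/- For any positive integers m, K with N = 2K+1 and any trigonometric polynomial φ of degree at most mK in d dimensions, the de-aliasing (Fourier collocation) projection R_N(φ) onto trigonometric polynomials of degree at most K satisfies ‖R_N(φ)‖_{L²} ≤ m^(d/2)·‖φ‖_{L²}. -/

import Mathlib

open Finset

/-!
The coefficient of `R_N φ` at `ℓ` is the sum of the coefficients of `φ` over the frequencies
`ℓ' ≡ ℓ (mod N)`. Since `N = 2K+1`, distinct `ℓ` with `|ℓᵢ| ≤ K` give disjoint classes, and each
class meets the box `|ℓ'ᵢ| ≤ mK` in at most `m` points per coordinate (the box has side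
`2mK + 1 ≤ mN`), hence in at most `m^d` points. Cauchy–Schwarz on each class and summing over
the disjoint classes gives the bound on the squared norms.
-/

theorem norm_sum_sq_le_card_mul_sum_norm_sq {ι E : Type*} [SeminormedAddCommGroup E]
    (s : Finset ι) (f : ι → E) :
    ‖∑ i ∈ s, f i‖ ^ 2 ≤ #s * ∑ i ∈ s, ‖f i‖ ^ 2 :=
  calc ‖∑ i ∈ s, f i‖ ^ 2 ≤ (∑ i ∈ s, ‖f i‖) ^ 2 := by
        gcongr
        exact norm_sum_le _ _
    _ ≤ #s * ∑ i ∈ s, ‖f i‖ ^ 2 := sq_sum_le_card_mul_sum_sq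

theorem sum_norm_sum_sq_le_of_pairwiseDisjoint {α β E : Type*} [SeminormedAddCommGroup E]
    {A : Finset α} {B : Finset β} {S : α → Finset β} {M : ℕ}
    (hdisj : (A : Set α).PairwiseDisjoint S) (hsub : ∀ a ∈ A, S a ⊆ B)
    (hcard : ∀ a ∈ A, #(S a) ≤ M) (c : β → E) :
    ∑ a ∈ A, ‖∑ b ∈ S a, c b‖ ^ 2 ≤ M * ∑ b ∈ B, ‖c b‖ ^ 2 := by
  classical
  calc ∑ a ∈ A, ‖∑ b ∈ S a, c b‖ ^ 2
      ≤ ∑ a ∈ A, M * ∑ b ∈ S a, ‖c b‖ ^ 2 := by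
        refine sum_le_sum fun a ha => (norm_sum_sq_le_card_mul_sum_norm_sq _ _).trans ?_
        gcongr
        exact hcard a ha
    _ = M * ∑ b ∈ A.biUnion S, ‖c b‖ ^ 2 := by rw [← mul_sum, sum_biUnion hdisj]
    _ ≤ M * ∑ b ∈ B, ‖c b‖ ^ 2 := by
        gcongr
        exact biUnion_subset.2 hsub

theorem Int.card_filter_modEq_Ico_add_mul (a v : ℤ) {r : ℤ} (hr : 0 < r) (m : ℕ) :
    #{x ∈ Ico a (a + m * r) | x ≡ v [ZMOD r]} = m := by
  have hr' : (r : ℚ) ≠ 0 := by positivity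
  have := Int.Ico_filter_modEq_card a (a + m * r) hr v
  push_cast at this
  rw [show ((a : ℚ) + m * r - v) / r = (a - v) / r + m by field_simp; ring,
    Int.ceil_add_natCast] at this
  omega

theorem Int.card_filter_modEq_Icc_le {a b v r : ℤ} (hr : 0 < r) {m : ℕ} (hab : b < a + m * r) :
    #{x ∈ Icc a b | x ≡ v [ZMOD r]} ≤ m :=
  (card_le_card (filter_subset_filter _ (Icc_subset_Ico_right hab))).trans_eq
    (Int.card_filter_modEq_Ico_add_mul a v hr m)

theorem Int.ModEq.eq_of_mem_Icc {a b x y r : ℤ} (h : x ≡ y [ZMOD r]) (hab : b - a < r)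
    (hx : x ∈ Icc a b) (hy : y ∈ Icc a b) : x = y := by
  rw [mem_Icc] at hx hy
  have := Int.eq_zero_of_abs_lt_dvd h.dvd (abs_lt.2 ⟨by linarith, by linarith⟩)
  linarith

theorem filter_piFinset_forall {ι : Type*} [DecidableEq ι] [Fintype ι] {α : ι → Type*}
    (t : ∀ i, Finset (α i)) (p : ∀ i, α i → Prop) [∀ i, DecidablePred (p i)] :
    {x ∈ Fintype.piFinset t | ∀ i, p i (x i)} =
      Fintype.piFinset fun i => {y ∈ t i | p i y} := by
  ext x
  simp [Fintype.mem_piFinset, forall_and]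

theorem stmt18_general (d m K : ℕ) (hm : 0 < m)
    (N : ℕ) (hN : N = 2 * K + 1) (c : (Fin d → ℤ) → ℂ) :
    Real.sqrt (∑ ℓ ∈ Fintype.piFinset
        (fun _ : Fin d => Finset.Icc (-(K : ℤ)) (K : ℤ)),
      ‖∑ ℓ' ∈ (Fintype.piFinset
          (fun _ : Fin d => Finset.Icc (-((m * K : ℕ) : ℤ)) ((m * K : ℕ) : ℤ))).filter
            (fun ℓ' => ∀ i, (N : ℤ) ∣ (ℓ' i - ℓ i)), c ℓ'‖ ^ 2)
      ≤ (m : ℝ) ^ ((d : ℝ) / 2) *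
        Real.sqrt (∑ ℓ ∈ Fintype.piFinset
            (fun _ : Fin d => Finset.Icc (-((m * K : ℕ) : ℤ)) ((m * K : ℕ) : ℤ)),
          ‖c ℓ‖ ^ 2) := by
  set I := Icc (-((m * K : ℕ) : ℤ)) ((m * K : ℕ) : ℤ)
  have hfiber (ℓ : Fin d → ℤ) :
      {ℓ' ∈ Fintype.piFinset fun _ : Fin d => I | ∀ i, (N : ℤ) ∣ ℓ' i - ℓ i} =
        Fintype.piFinset fun i => {x ∈ I | x ≡ ℓ i [ZMOD N]} := by
    rw [← filter_piFinset_forall]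
    simp only [Int.modEq_comm, Int.modEq_iff_dvd]
  have hcard (ℓ : Fin d → ℤ) :
      #(Fintype.piFinset fun i => {x ∈ I | x ≡ ℓ i [ZMOD N]}) ≤ m ^ d := by
    rw [Fintype.card_piFinset]
    have hN' : (N : ℤ) = 2 * K + 1 := by rw [hN]; push_cast; ring
    simpa using prod_le_pow_card univ _ m fun i _ =>
      Int.card_filter_modEq_Icc_le (v := ℓ i) (by omega) (by rw [hN']; push_cast; nlinarith)
  have hdisj :
      (Fintype.piFinset fun _ : Fin d => Icc (-(K : ℤ)) K : Set (Fin d → ℤ)).PairwiseDisjoint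
        fun ℓ => Fintype.piFinset fun i => {x ∈ I | x ≡ ℓ i [ZMOD N]} := by
    intro ℓ₁ h₁ ℓ₂ h₂ hne
    refine disjoint_left.2 fun x hx₁ hx₂ => hne (funext fun i => ?_)
    simp only [Fintype.coe_piFinset, Set.mem_pi, mem_coe, Fintype.mem_piFinset, mem_filter]
      at h₁ h₂ hx₁ hx₂
    exact ((hx₁ i).2.symm.trans (hx₂ i).2).eq_of_mem_Icc (by omega)
      (h₁ i trivial) (h₂ i trivial)
  have key := sum_norm_sum_sq_le_of_pairwiseDisjoint hdisj
    (fun ℓ _ => (hfiber ℓ).symm ▸ filter_subset _ _) (fun ℓ _ => hcard ℓ) c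
  simp_rw [hfiber]
  rw [div_eq_mul_one_div, Real.rpow_mul (by positivity), Real.rpow_natCast, ← Real.sqrt_eq_rpow,
    ← Real.sqrt_mul (by positivity)]
  exact Real.sqrt_le_sqrt (by exact_mod_cast key)

/-- Aliasing error control (Lemma 2.1, case `r = 0`): identifying a trigonometric
polynomial `φ` of degree at most `m·K` in `d` dimensions with its Fourier
coefficients `c : (Fin d → ℤ) → ℂ` supported on frequencies `|ℓᵢ| ≤ m·K`, the
de-aliasing projection `R_N φ` (with `N = 2K+1`) has Fourier coefficients, for
`|ℓᵢ| ≤ K`, given by the sum of all coefficients `c ℓ'` with `ℓ' ≡ ℓ (mod N)`.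
By Parseval, `‖R_N φ‖_{L²} ≤ m^(d/2) · ‖φ‖_{L²}` reads as the corresponding
inequality between the `ℓ²` norms of the coefficient arrays. -/
theorem stmt18 (d m K : ℕ) (hd : 0 < d) (hm : 0 < m) (hK : 0 < K)
    (N : ℕ) (hN : N = 2 * K + 1) (c : (Fin d → ℤ) → ℂ) :
    Real.sqrt (∑ ℓ ∈ Fintype.piFinset
        (fun _ : Fin d => Finset.Icc (-(K : ℤ)) (K : ℤ)),
      ‖∑ ℓ' ∈ (Fintype.piFinset
          (fun _ : Fin d => Finset.Icc (-((m * K : ℕ) : ℤ)) ((m * K : ℕ) : ℤ))).filter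
            (fun ℓ' => ∀ i, (N : ℤ) ∣ (ℓ' i - ℓ i)), c ℓ'‖ ^ 2)
      ≤ (m : ℝ) ^ ((d : ℝ) / 2) *
        Real.sqrt (∑ ℓ ∈ Fintype.piFinset
            (fun _ : Fin d => Finset.Icc (-((m * K : ℕ) : ℤ)) ((m * K : ℕ) : ℤ)),
          ‖c ℓ‖ ^ 2) :=
  stmt18_general d m K hm N hN c
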